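/- In the ring of polynomials with natural number coefficients one has the identity (1+X)(1+X²+X⁴) = (1+X³)(1+X+X²), and each of the four polynomials 1+X, 1+X²+X⁴, 1+X³, 1+X+X² is irreducible in the multiplicative monoid of nonzero polynomials over ℕ; consequently this commutative monoid does not have the unique decomposition property (it is not a free commutative monoid). -/
import Mathlib


/-- Irreducibility in the multiplicative monoid of nonzero polynomials over `ℕ`,
whose only unit is `1`. -/
def NIrr (p : Polynomial ℕ) : Prop :=
  p ≠ 0 ∧ p ≠ 1 ∧ ∀ q r : Polynomial ℕ, p = q * r → q = 1 ∨ r = 1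

open Polynomial

lemma eq_one_of_eval_one (q : Polynomial ℕ) (h0 : q.coeff 0 = 1) (h1 : q.eval 1 = 1) :
    q = 1 := by
  have hsum : ∑ i ∈ Finset.range (q.natDegree + 1), q.coeff i = 1 := by
    have := eval_eq_sum_range (x := (1 : ℕ)) (p := q)
    simpa [h1] using this.symm
  rw [Finset.sum_range_succ'] at hsum
  simp only [h0] at hsum
  have hrest : ∑ i ∈ Finset.range q.natDegree, q.coeff (i + 1) = 0 := by omega
  have hcoeff : ∀ i ∈ Finset.range q.natDegree, q.coeff (i + 1) = 0 := by
    intro i hi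
    exact Finset.sum_eq_zero_iff.mp hrest i hi
  ext n
  cases n with
  | zero => simpa using h0
  | succ n =>
    simp only [coeff_one]
    by_cases hn : n < q.natDegree
    · simpa using hcoeff n (Finset.mem_range.mpr hn)
    · have : q.natDegree < n + 1 := by omega
      simp [coeff_eq_zero_of_natDegree_lt this]

lemma nirr_of_prime (p : Polynomial ℕ) (h0 : p.coeff 0 = 1) (hp : (p.eval 1).Prime) :
    NIrr p := by
  refine ⟨?_, ?_, ?_⟩
  · rintro rfl; simp at hp; exact Nat.not_prime_zero hp
  · rintro rfl; simp at h0 hp; exact Nat.not_prime_one hp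
  · intro q r hqr
    have hc : q.coeff 0 * r.coeff 0 = 1 := by
      rw [← mul_coeff_zero, ← hqr, h0]
    obtain ⟨hcq, hcr⟩ := mul_eq_one.mp hc
    have he : q.eval 1 * r.eval 1 = p.eval 1 := by rw [hqr, eval_mul]
    rcases (Nat.prime_mul_iff.mp (he ▸ hp)) with ⟨_, h1⟩ | ⟨_, h1⟩
    · right; exact eq_one_of_eval_one r hcr h1
    · left; exact eq_one_of_eval_one q hcq h1

/-- STATEMENT 16 -/
theorem nat_polynomials_not_free :
    ((1 + X : Polynomial ℕ) * (1 + X ^ 2 + X ^ 4) =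
      (1 + X ^ 3) * (1 + X + X ^ 2)) ∧
    NIrr (1 + X) ∧ NIrr (1 + X ^ 2 + X ^ 4) ∧
    NIrr (1 + X ^ 3) ∧ NIrr (1 + X + X ^ 2) ∧
    ¬ (∀ p : Polynomial ℕ, p ≠ 0 →
      ∃ m : Multiset (Polynomial ℕ), (∀ q ∈ m, NIrr q) ∧ m.prod = p ∧
        ∀ m' : Multiset (Polynomial ℕ), (∀ q ∈ m', NIrr q) → m'.prod = p → m' = m) := by
  have hid : ((1 + X : Polynomial ℕ) * (1 + X ^ 2 + X ^ 4) =
      (1 + X ^ 3) * (1 + X + X ^ 2)) := by ring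
  have i1 : NIrr (1 + X) := by
    apply nirr_of_prime <;> simp [Nat.prime_two]
  have i2 : NIrr (1 + X ^ 2 + X ^ 4) := by
    apply nirr_of_prime <;> simp [Nat.prime_three]
  have i3 : NIrr (1 + X ^ 3) := by
    apply nirr_of_prime <;> simp [Nat.prime_two]
  have i4 : NIrr (1 + X + X ^ 2) := by
    apply nirr_of_prime <;> simp [Nat.prime_three]
  refine ⟨hid, i1, i2, i3, i4, ?_⟩
  intro h
  have hpne : ((1 + X : Polynomial ℕ) * (1 + X ^ 2 + X ^ 4)) ≠ 0 := by
    intro h0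
    have := congrArg (Polynomial.eval 1) h0
    simp at this
  obtain ⟨m, -, -, huniq⟩ := h _ hpne
  have h1 : ({1 + X, 1 + X ^ 2 + X ^ 4} : Multiset (Polynomial ℕ)) = m := by
    apply huniq
    · intro q hq
      rcases Multiset.mem_cons.mp hq with rfl | hq
      · exact i1
      · rw [Multiset.mem_singleton.mp hq]; exact i2
    · simp [Multiset.prod_pair]
  have h2 : ({1 + X ^ 3, 1 + X + X ^ 2} : Multiset (Polynomial ℕ)) = m := by
    apply huniq
    · intro q hq
      rcases Multiset.mem_cons.mp hq with rfl | hq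
      · exact i3
      · rw [Multiset.mem_singleton.mp hq]; exact i4
    · simp [Multiset.prod_pair, hid]
  have h12 := h1.trans h2.symm
  have hmem : (1 + X : Polynomial ℕ) ∈ ({1 + X ^ 3, 1 + X + X ^ 2} : Multiset (Polynomial ℕ)) := by
    rw [← h12]; simp
  rcases Multiset.mem_cons.mp hmem with heq | hmem'
  · have := congrArg (Polynomial.eval 2) heq
    simp at this
  · have := congrArg (Polynomial.eval 2) (Multiset.mem_singleton.mp hmem')
    simp at this
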